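/- arXiv:1801.00291 — 3 statements merged into one kernel-verified Lean document; each statement's English description precedes it below -/
import Mathlib

section
/- Let q ≥ 0 be a real number, t a real number with |t| < 1, and 0 < u < 1/√((q+t)(1−t)). Then for every integer k ≥ 0, the G(t)-transform of the function τ ↦ e^{−(q+1)τ} ((q+t)(1−t))^{−k/2} I_k(2√((q+t)(1−t)) τ) equals u^{k−1}, where the G(t)-transform of an integrable function f is defined by G(t)f(u) = (u^{−2} − (q+t)(1−t)) ∫_0^∞ e^{−((q+t)(1−t)u + 1/u − (q+1))τ} f(τ) dτ. -/
/-!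
Expanding `I_k` in its power series and integrating termwise against `e^{-sτ}` turns the
Laplace transform at `s = a u + 1/u`, `a = (q+t)(1-t)`, into `(√a/s)^k / s · B_k(y)`, where
`B_k(y) = ∑ₘ C(k+2m, m) yᵐ` and `y = a/s² = x/(1+x)²` with `x = a u² < 1`.
Pascal's rule gives `B_{k+1} = B_k + y B_{k+2}` and `2y B_1 = B_0 - 1`. By the first relation
the defect `B_{k+1} - (1+x) B_k` is multiplied by `(1+x)/x > 2` at each step, while
`B_k = O(2^k)`; so it vanishes and `B_k = (1+x)^{k+1}/(1-x)`. The Laplace transform is then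
`a^{k/2} u^{k+1}/(1 - a u²)`, and the prefactor `u^{-2} - a` turns it into `u^{k-1}`.
-/

open Real MeasureTheory

/-- The modified Bessel function of the first kind of nonnegative integer order `k`. -/
noncomputable def besselI (k : ℕ) (τ : ℝ) : ℝ :=
  ∑' m : ℕ, (τ / 2) ^ (k + 2 * m) / ((Nat.factorial m : ℝ) * (Nat.factorial (m + k) : ℝ))

/-- The `G(t)`-transform of a function `f : (0,∞) → ℝ`:
`G(t)f(u) = (u^{−2} − (q+t)(1−t)) ∫_0^∞ e^{−((q+t)(1−t)u + 1/u − (q+1))τ} f(τ) dτ`. -/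
noncomputable def Gtransform (q t : ℝ) (f : ℝ → ℝ) (u : ℝ) : ℝ :=
  (u ^ (-2 : ℝ) - (q + t) * (1 - t)) *
    ∫ τ in Set.Ioi (0 : ℝ),
      Real.exp (-((q + t) * (1 - t) * u + 1 / u - (q + 1)) * τ) * f τ

open scoped Nat

noncomputable def centralBinomSeries (k : ℕ) (y : ℝ) : ℝ :=
  ∑' m : ℕ, ((k + 2 * m).choose m : ℝ) * y ^ m

lemma norm_choose_mul_pow_le (k m : ℕ) (y : ℝ) :
    ‖((k + 2 * m).choose m : ℝ) * y ^ m‖ ≤ 2 ^ k * (4 * |y|) ^ m := by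
  have hchoose : ((k + 2 * m).choose m : ℝ) ≤ 2 ^ k * 4 ^ m := by
    rw [show (4 : ℝ) = 2 ^ 2 by norm_num, ← pow_mul, ← pow_add]
    exact_mod_cast Nat.choose_le_two_pow _ _
  rw [norm_mul, norm_pow, Real.norm_eq_abs, Real.norm_eq_abs, Nat.abs_cast, mul_pow, ← mul_assoc]
  gcongr

section centralBinomSeries

variable {y : ℝ}

lemma summable_choose_mul_pow (hy : |y| < 1 / 4) (k : ℕ) :
    Summable fun m : ℕ => ((k + 2 * m).choose m : ℝ) * y ^ m :=
  .of_norm_bounded ((summable_geometric_of_lt_one (by positivity) (by linarith)).mul_left _)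
    (norm_choose_mul_pow_le k · y)

lemma abs_centralBinomSeries_le (hy : |y| < 1 / 4) (k : ℕ) :
    |centralBinomSeries k y| ≤ 2 ^ k * (1 - 4 * |y|)⁻¹ :=
  tsum_of_norm_bounded ((hasSum_geometric_of_lt_one (by positivity) (by linarith)).mul_left _)
    (norm_choose_mul_pow_le k · y)

lemma abs_centralBinomSeries_succ_sub_mul_le (hy : |y| < 1 / 4) {c : ℝ} (hc0 : 0 ≤ c)
    (hc2 : c ≤ 2) (k : ℕ) :
    |centralBinomSeries (k + 1) y - c * centralBinomSeries k y|
      ≤ 4 * (1 - 4 * |y|)⁻¹ * 2 ^ k := by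
  have h1 := abs_centralBinomSeries_le hy (k + 1)
  have h0 := abs_centralBinomSeries_le hy k
  calc |centralBinomSeries (k + 1) y - c * centralBinomSeries k y|
      ≤ |centralBinomSeries (k + 1) y| + c * |centralBinomSeries k y| := by
        grw [abs_sub, abs_mul, abs_of_nonneg hc0]
    _ ≤ 2 ^ (k + 1) * (1 - 4 * |y|)⁻¹ + 2 * (2 ^ k * (1 - 4 * |y|)⁻¹) := by
        gcongr
    _ = 4 * (1 - 4 * |y|)⁻¹ * 2 ^ k := by ring

lemma centralBinomSeries_eq_one_add (hy : |y| < 1 / 4) (k : ℕ) :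
    centralBinomSeries k y
      = 1 + ∑' m : ℕ, ((k + 2 * (m + 1)).choose (m + 1) : ℝ) * y ^ (m + 1) := by
  rw [centralBinomSeries, (summable_choose_mul_pow hy k).tsum_eq_zero_add]
  simp

lemma centralBinomSeries_succ (hy : |y| < 1 / 4) (k : ℕ) :
    centralBinomSeries (k + 1) y = centralBinomSeries k y + y * centralBinomSeries (k + 2) y := by
  have hshift := (summable_nat_add_iff 1).mpr (summable_choose_mul_pow hy k)
  rw [centralBinomSeries_eq_one_add hy (k + 1), centralBinomSeries_eq_one_add hy k,
    centralBinomSeries, ← tsum_mul_left, add_assoc,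
    ← hshift.tsum_add ((summable_choose_mul_pow hy _).mul_left y)]
  congr 1
  refine tsum_congr fun m => ?_
  rw [show k + 1 + 2 * (m + 1) = k + 2 + 2 * m + 1 by ring, Nat.choose_succ_succ',
    show k + 2 * (m + 1) = k + 2 + 2 * m by ring]
  push_cast
  ring

lemma two_mul_mul_centralBinomSeries_one (hy : |y| < 1 / 4) :
    2 * y * centralBinomSeries 1 y = centralBinomSeries 0 y - 1 := by
  rw [centralBinomSeries_eq_one_add hy 0, centralBinomSeries, ← tsum_mul_left,
    add_sub_cancel_left]
  refine tsum_congr fun m => ?_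
  rw [show 0 + 2 * (m + 1) = 2 * m + 1 + 1 by ring, Nat.choose_succ_succ', Nat.choose_symm_half,
    show 1 + 2 * m = 2 * m + 1 by ring]
  push_cast
  ring

end centralBinomSeries

lemma eq_zero_of_succ_eq_mul_of_abs_le {e : ℕ → ℝ} {c ρ C : ℝ} (hρ : 0 ≤ ρ) (hρc : ρ < |c|)
    (hrec : ∀ k, e (k + 1) = c * e k) (hle : ∀ k, |e k| ≤ C * ρ ^ k) (k : ℕ) : e k = 0 := by
  have hpow : ∀ k, e k = c ^ k * e 0 := by
    intro k
    induction k with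
    | zero => simp
    | succ k ih => rw [hrec, ih, pow_succ]; ring
  have hc : 0 < |c| := hρ.trans_lt hρc
  have hbound : ∀ k, |e 0| ≤ C * (ρ / |c|) ^ k := by
    intro k
    have := hle k
    rw [hpow, abs_mul, abs_pow] at this
    rw [div_pow, mul_div_assoc', le_div_iff₀ (by positivity)]
    linarith
  have hlim : Filter.Tendsto (fun k : ℕ => C * (ρ / |c|) ^ k) Filter.atTop (nhds 0) := by
    simpa using (tendsto_pow_atTop_nhds_zero_of_lt_one (by positivity)
      ((div_lt_one hc).mpr hρc)).const_mul C
  have h0 : |e 0| ≤ 0 := ge_of_tendsto' hlim hbound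
  rw [hpow, abs_nonpos_iff.mp h0, mul_zero]

lemma centralBinomSeries_div_one_add_sq {x : ℝ} (hx0 : 0 < x) (hx1 : x < 1) (k : ℕ) :
    centralBinomSeries k (x / (1 + x) ^ 2) = (1 + x) ^ (k + 1) / (1 - x) := by
  set y := x / (1 + x) ^ 2 with hy_def
  have hy : |y| < 1 / 4 := by
    rw [abs_of_pos (by positivity), hy_def, div_lt_div_iff₀ (by positivity) (by norm_num)]
    nlinarith [sq_pos_of_pos (sub_pos.2 hx1)]
  have hyx : y * (1 + x) ^ 2 = x := by rw [hy_def]; field_simp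
  have hgrowth : 2 < |(1 + x) / x| := by
    rw [abs_of_pos (by positivity), lt_div_iff₀ hx0]
    linarith
  have hrec : ∀ k, centralBinomSeries (k + 2) y - (1 + x) * centralBinomSeries (k + 1) y
      = (1 + x) / x * (centralBinomSeries (k + 1) y - (1 + x) * centralBinomSeries k y) := by
    intro k
    rw [div_mul_eq_mul_div, eq_div_iff hx0.ne']
    linear_combination
      (-(1 + x) ^ 2) * centralBinomSeries_succ hy k - centralBinomSeries (k + 2) y * hyx
  have hstep : ∀ k, centralBinomSeries (k + 1) y = (1 + x) * centralBinomSeries k y :=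
    fun k => sub_eq_zero.mp (eq_zero_of_succ_eq_mul_of_abs_le zero_le_two hgrowth hrec
      (abs_centralBinomSeries_succ_sub_mul_le hy (by positivity) (by linarith)) k)
  have hzero : centralBinomSeries 0 y = (1 + x) / (1 - x) := by
    have h := two_mul_mul_centralBinomSeries_one hy
    rw [hstep 0] at h
    rw [eq_div_iff (by linarith)]
    linear_combination (-(1 + x)) * h + 2 * centralBinomSeries 0 y * hyx
  induction k with
  | zero => simpa using hzero
  | succ k ih => rw [hstep, ih]; field_simp; ring

lemma integral_pow_mul_exp_neg_mul_Ioi {s : ℝ} (hs : 0 < s) (n : ℕ) :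
    ∫ τ in Set.Ioi 0, τ ^ n * exp (-(s * τ)) = n ! / s ^ (n + 1) := by
  have h := integral_rpow_mul_exp_neg_mul_Ioi (a := n + 1) (by positivity) hs
  simp_rw [add_sub_cancel_right, rpow_natCast] at h
  rw [h, Gamma_nat_eq_factorial, ← Nat.cast_add_one, rpow_natCast, one_div, inv_pow]
  ring

lemma integrableOn_pow_mul_exp_neg_mul_Ioi {s : ℝ} (hs : 0 < s) (n : ℕ) :
    IntegrableOn (fun τ => τ ^ n * exp (-(s * τ))) (Set.Ioi 0) :=
  .of_integral_ne_zero (by rw [integral_pow_mul_exp_neg_mul_Ioi hs]; positivity)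

lemma pow_div_factorial_mul_factorial_div_pow (β : ℝ) {s : ℝ} (hs : s ≠ 0) (k m : ℕ) :
    β ^ (k + 2 * m) / (m ! * (m + k) !) * ((k + 2 * m) ! / s ^ (k + 2 * m + 1))
      = (β / s) ^ k / s * ((k + 2 * m).choose m * ((β / s) ^ 2) ^ m) := by
  have h := Nat.choose_mul_factorial_mul_factorial (show m ≤ k + 2 * m by omega)
  rw [show k + 2 * m - m = m + k by omega] at h
  rw [← h]
  push_cast
  simp only [div_pow, ← pow_mul]
  field_simp
  ring

lemma integral_exp_neg_mul_besselI_Ioi_eq_centralBinomSeries {s b : ℝ} (hbs : |b| < s)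
    (k : ℕ) :
    ∫ τ in Set.Ioi 0, exp (-(s * τ)) * besselI k (b * τ)
      = (b / (2 * s)) ^ k / s * centralBinomSeries k ((b / (2 * s)) ^ 2) := by
  have hs : 0 < s := (abs_nonneg b).trans_lt hbs
  set coeff : ℝ → ℕ → ℝ := fun β m => β ^ (k + 2 * m) / (m ! * (m + k) !)
  have hseries : ∀ τ, exp (-(s * τ)) * besselI k (b * τ)
      = ∑' m, coeff (b / 2) m * (τ ^ (k + 2 * m) * exp (-(s * τ))) := by
    intro τ
    rw [besselI, ← tsum_mul_left]
    refine tsum_congr fun m => ?_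
    rw [show b * τ / 2 = b / 2 * τ by ring, mul_pow]
    ring
  have hterm : ∀ β m, ∫ τ in Set.Ioi 0, coeff β m * (τ ^ (k + 2 * m) * exp (-(s * τ)))
      = (β / s) ^ k / s * ((k + 2 * m).choose m * ((β / s) ^ 2) ^ m) := by
    intro β m
    rw [integral_const_mul, integral_pow_mul_exp_neg_mul_Ioi hs,
      pow_div_factorial_mul_factorial_div_pow β hs.ne']
  have hnorm : ∀ m, ∫ τ in Set.Ioi 0, ‖coeff (b / 2) m * (τ ^ (k + 2 * m) * exp (-(s * τ)))‖
      = ∫ τ in Set.Ioi 0, coeff (|b| / 2) m * (τ ^ (k + 2 * m) * exp (-(s * τ))) := by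
    intro m
    refine setIntegral_congr_fun measurableSet_Ioi fun τ hτ => ?_
    have : 0 < τ := hτ
    simp only [coeff, norm_mul, norm_div, norm_pow, Real.norm_eq_abs, Nat.abs_cast,
      abs_of_pos this, abs_exp, abs_two]
  have hw : |(|b| / (2 * s)) ^ 2| < 1 / 4 := by
    rw [abs_pow, abs_div, abs_abs, abs_of_pos (by positivity : 0 < 2 * s), div_pow,
      div_lt_iff₀ (by positivity)]
    nlinarith [abs_nonneg b]
  rw [setIntegral_congr_fun measurableSet_Ioi fun τ _ => hseries τ,
    ← integral_tsum_of_summable_integral_norm]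
  · simp_rw [hterm, tsum_mul_left, div_div]
    rfl
  · exact fun m => ((integrableOn_pow_mul_exp_neg_mul_Ioi hs _).const_mul _)
  · simp_rw [hnorm, hterm, div_div]
    exact (summable_choose_mul_pow hw k).mul_left _

lemma integral_exp_neg_mul_besselI_two_mul_sqrt_Ioi {a u : ℝ} (ha : 0 < a) (hu : 0 < u)
    (hau : a * u ^ 2 < 1) (k : ℕ) :
    ∫ τ in Set.Ioi 0, exp (-((a * u + 1 / u) * τ)) * besselI k (2 * √a * τ)
      = √a ^ k * u ^ (k + 1) / (1 - a * u ^ 2) := by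
  have hsqrt : √a ^ 2 = a := sq_sqrt ha.le
  have hs : a * u + 1 / u = (1 + a * u ^ 2) / u := by field_simp; ring
  have hw : 2 * √a / (2 * ((1 + a * u ^ 2) / u)) = √a * u / (1 + a * u ^ 2) := by field_simp
  have hw2 : (√a * u / (1 + a * u ^ 2)) ^ 2 = a * u ^ 2 / (1 + a * u ^ 2) ^ 2 := by
    rw [div_pow, mul_pow, hsqrt]
  have hbs : |2 * √a| < (1 + a * u ^ 2) / u := by
    have : √a * u < 1 := by nlinarith [sqrt_nonneg a]
    rw [abs_of_nonneg (by positivity), lt_div_iff₀ hu]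
    nlinarith [sq_pos_of_pos (sub_pos.2 this)]
  rw [hs, integral_exp_neg_mul_besselI_Ioi_eq_centralBinomSeries hbs, hw, hw2,
    centralBinomSeries_div_one_add_sq (by positivity) hau]
  have : 1 - u ^ 2 * a ≠ 0 := by linarith
  have : 1 + u ^ 2 * a ≠ 0 := by positivity
  rw [div_pow, mul_pow]
  field_simp
  ring

lemma pos_and_mul_sq_lt_one_of_lt_one_div_sqrt {a u : ℝ} (hu : 0 < u) (h : u < 1 / √a) :
    0 < a ∧ a * u ^ 2 < 1 := by
  have ha : 0 < a := by
    by_contra! ha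
    rw [sqrt_eq_zero'.mpr ha, div_zero] at h
    exact h.not_gt hu
  rw [lt_div_iff₀ (sqrt_pos.mpr ha)] at h
  have := pow_lt_one₀ (by positivity) h two_ne_zero
  rw [mul_pow, sq_sqrt ha.le, mul_comm] at this
  exact ⟨ha, this⟩

theorem Gtransform_besselI_general (q t u : ℝ) (k : ℕ)
    (hu0 : 0 < u) (hu1 : u < 1 / Real.sqrt ((q + t) * (1 - t))) :
    Gtransform q t
      (fun τ => Real.exp (-(q + 1) * τ) * ((q + t) * (1 - t)) ^ (-(k : ℝ) / 2) *
        besselI k (2 * Real.sqrt ((q + t) * (1 - t)) * τ)) u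
      = u ^ ((k : ℝ) - 1) := by
  rw [Gtransform]
  set a := (q + t) * (1 - t)
  obtain ⟨ha, hau⟩ := pos_and_mul_sq_lt_one_of_lt_one_div_sqrt hu0 hu1
  have hintegrand : ∀ τ, exp (-(a * u + 1 / u - (q + 1)) * τ)
      * (exp (-(q + 1) * τ) * a ^ (-(k : ℝ) / 2) * besselI k (2 * √a * τ))
      = a ^ (-(k : ℝ) / 2) * (exp (-((a * u + 1 / u) * τ)) * besselI k (2 * √a * τ)) := by
    intro τ
    rw [show -((a * u + 1 / u) * τ) = -(a * u + 1 / u - (q + 1)) * τ + -(q + 1) * τ by ring,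
      exp_add]
    ring
  have hpow : a ^ (-(k : ℝ) / 2) * √a ^ k = 1 := by
    rw [sqrt_eq_rpow, ← rpow_natCast, ← rpow_mul ha.le, ← rpow_add ha,
      show -(k : ℝ) / 2 + 1 / 2 * k = 0 by ring, rpow_zero]
  rw [funext hintegrand, integral_const_mul,
    integral_exp_neg_mul_besselI_two_mul_sqrt_Ioi ha hu0 hau, rpow_sub hu0, rpow_natCast, rpow_one,
    rpow_neg hu0.le, rpow_two, mul_div_assoc', ← mul_assoc (a ^ _), hpow]
  have : 1 - u ^ 2 * a ≠ 0 := by linarith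
  field_simp
  ring

/-- For `q ≥ 0`, `|t| < 1`, `0 < u < 1/√((q+t)(1−t))` and every `k ≥ 0`, the
`G(t)`-transform of `τ ↦ e^{−(q+1)τ} ((q+t)(1−t))^{−k/2} I_k(2√((q+t)(1−t)) τ)`
equals `u^{k−1}`. -/
theorem Gtransform_besselI (q t u : ℝ) (k : ℕ)
    (hq : 0 ≤ q) (ht : |t| < 1)
    (hu0 : 0 < u) (hu1 : u < 1 / Real.sqrt ((q + t) * (1 - t))) :
    Gtransform q t
      (fun τ => Real.exp (-(q + 1) * τ) * ((q + t) * (1 - t)) ^ (-(k : ℝ) / 2) *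
        besselI k (2 * Real.sqrt ((q + t) * (1 - t)) * τ)) u
      = u ^ ((k : ℝ) - 1) :=
  Gtransform_besselI_general q t u k hu0 hu1
end

section
/- Let X be a connected simple graph with bounded degree, x₀ a vertex, and e an edge with origin x₀. For every m ≥ 3, the weighted closed-path count C_m(t)(x₀, e, ē) satisfies C_m(t)(x₀, e, ē) = C_{m−2}(t)(t(e), t(e)) + 2(t−1) N_{m−2}(t, t(e), ē) + (t²−1) C_{m−2}(t)(t(e), ē, e). -/
open scoped BigOperators
open SimpleGraph

noncomputable section

namespace BZ

open Classical

variable {V : Type*} (G : SimpleGraph V)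

/-- Bump count of a walk: the number of indices `i` with `e_i = ē_{i+1}`. -/
def bc {x y : V} (w : G.Walk x y) : ℕ :=
  ((w.darts.zip w.darts.tail).filter fun p => p.2 = p.1.symm).length

/-- A closed walk has a tail if `e_m = ē_1` (with `m ≥ 1`). -/
def hasTail {x : V} (w : G.Walk x x) : Prop :=
  1 ≤ w.length ∧ w.darts.getLast? = w.darts.head?.map SimpleGraph.Dart.symm

/-- Cyclic bump count of a closed walk: `cbc = bc + 1` if the walk has a tail, else `bc`. -/
def cbc {x : V} (w : G.Walk x x) : ℕ :=
  bc G w + if hasTail G w then 1 else 0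

/-- `C_m(t)(x, y)`: the weighted count `∑ t^{bc(C)}` over walks from `x` to `y` of length `m`. -/
def Cent (t : ℂ) (m : ℕ) (x y : V) : ℂ :=
  ∑' w : {w : G.Walk x y // w.length = m}, t ^ bc G w.1

/-- `C_m(t)(x, f, g)`: the weighted count `∑ t^{bc(C)}` over closed walks of length `m`
at `x` with first edge `f` and last edge `g`. -/
def CentFL (t : ℂ) (m : ℕ) (x : V) (f g : G.Dart) : ℂ :=
  ∑' w : {w : G.Walk x x // w.length = m ∧ w.darts.head? = some f ∧
      w.darts.getLast? = some g}, t ^ bc G w.1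

/-- `N_m(t, x, f)`: the weighted count `∑ t^{bc(C)}` over tail-less closed walks of
length `m` at `x` with first edge `f`. -/
def Nfirst (t : ℂ) (m : ℕ) (x : V) (f : G.Dart) : ℂ :=
  ∑' w : {w : G.Walk x x // w.length = m ∧ w.darts.head? = some f ∧ ¬ hasTail G w},
    t ^ bc G w.1

/-! Prepending `e` and appending `ē` maps the closed walks of length `m - 2` at `t(e)`
bijectively onto the closed walks of length `m` at `x₀` with first edge `e` and last edge `ē`,
and adds one bump for each of the events "the walk starts with `ē`" and "the walk ends with
`e`". Splitting the sum along these two events produces the three correction terms; reversing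
walks identifies the part "ends with `e` but does not start with `ē`" with the tail-less part
`N_{m-2}(t, t(e), ē)`, whence the factor `2`. -/

lemma tsum_subtype_and_eq_sum_ite {α M : Type*} [AddCommMonoid M] [TopologicalSpace M]
    {p q : α → Prop} [Fintype {a // p a}] [DecidablePred q] (f : α → M) :
    ∑' a : {a // p a ∧ q a}, f a = ∑ a : {a // p a}, if q a then f a else 0 := by
  calc ∑' a : {a // p a ∧ q a}, f a
      = ∑ a : {x : {a // p a} // q x}, f a := by
        rw [← Equiv.tsum_eq (Equiv.subtypeSubtypeEquivSubtypeInter p q), tsum_fintype]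
        rfl
    _ = ∑ a ∈ Finset.univ.filter (fun x : {a // p a} => q x), f a :=
        (Finset.sum_subtype (p := fun x : {a // p a} => q x) _ (by simp) fun x => f x).symm
    _ = _ := Finset.sum_filter _ _

lemma pow_add_ite_add_ite {R : Type*} [CommRing R] (t : R) (k : ℕ) (a b : Prop)
    [Decidable a] [Decidable b] :
    t ^ (k + (if a then 1 else 0) + (if b then 1 else 0))
      = t ^ k + (t - 1) * (if a ∧ ¬ b then t ^ k else 0)
        + (t - 1) * (if ¬ a ∧ b then t ^ k else 0)
        + (t ^ 2 - 1) * (if a ∧ b then t ^ k else 0) := by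
  by_cases ha : a <;> by_cases hb : b <;> simp [ha, hb, pow_add] <;> ring

variable {G}

def bcList (l : List G.Dart) : ℕ :=
  ((l.zip l.tail).filter fun p => p.2 = p.1.symm).length

lemma bcList_cons (a : G.Dart) (l : List G.Dart) :
    bcList (a :: l) = (if l.head? = some a.symm then 1 else 0) + bcList l := by
  cases l with
  | nil => simp [bcList]
  | cons b l => by_cases h : b = a.symm <;> simp [bcList, h, Nat.add_comm]

lemma bcList_append_singleton (l : List G.Dart) (b : G.Dart) :
    bcList (l ++ [b]) = bcList l + (if l.getLast? = some b.symm then 1 else 0) := by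
  induction l with
  | nil => simp [bcList]
  | cons a l ih =>
    rw [List.cons_append, bcList_cons, ih, bcList_cons]
    cases l with
    | nil =>
      have hsymm : b = a.symm ↔ a = b.symm := Dart.symm_involutive.eq_iff.symm.trans eq_comm
      simp [bcList, hsymm]
    | cons c l =>
      by_cases hc : c = a.symm <;> simp [hc, Nat.add_assoc]

lemma bcList_reverse_map_symm (l : List G.Dart) :
    bcList (l.map Dart.symm).reverse = bcList l := by
  induction l with
  | nil => rfl
  | cons a l ih =>
    have hhead : (l.map Dart.symm).head? = some a ↔ l.head? = some a.symm := by
      cases l <;> simp [Dart.symm_involutive.eq_iff]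
    rw [List.map_cons, List.reverse_cons, bcList_append_singleton, ih, List.getLast?_reverse,
      bcList_cons, Dart.symm_symm]
    simp only [hhead]
    omega

lemma head?_darts_reverse {x y : V} (w : G.Walk x y) :
    w.reverse.darts.head? = w.darts.getLast?.map Dart.symm := by
  simp [Walk.darts_reverse, List.head?_reverse, List.getLast?_map]

lemma getLast?_darts_reverse {x y : V} (w : G.Walk x y) :
    w.reverse.darts.getLast? = w.darts.head?.map Dart.symm := by
  simp [Walk.darts_reverse, List.getLast?_reverse, List.head?_map]

lemma bc_reverse {x y : V} (w : G.Walk x y) : bc G w.reverse = bc G w := by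
  simpa [bc, bcList, Walk.darts_reverse] using bcList_reverse_map_symm w.darts

def extendWalk (e : G.Dart) (w : G.Walk e.snd e.snd) : G.Walk e.fst e.fst :=
  Walk.cons e.adj (w.concat e.adj.symm)

lemma darts_extendWalk (e : G.Dart) (w : G.Walk e.snd e.snd) :
    (extendWalk e w).darts = e :: (w.darts ++ [e.symm]) := by
  simp [extendWalk, Walk.darts_concat]
  rfl

lemma bc_extendWalk (e : G.Dart) {w : G.Walk e.snd e.snd} (hw : w.length ≠ 0) :
    bc G (extendWalk e w) = bc G w + (if w.darts.head? = some e.symm then 1 else 0)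
      + (if w.darts.getLast? = some e then 1 else 0) := by
  have hhead : (w.darts ++ [e.symm]).head? = w.darts.head? := by
    obtain ⟨a, l, hl⟩ := List.exists_cons_of_ne_nil (by rwa [Ne, ← List.length_eq_zero_iff,
      Walk.length_darts])
    simp [hl]
  change bcList (extendWalk e w).darts = _
  rw [darts_extendWalk, bcList_cons, bcList_append_singleton, hhead, Dart.symm_symm]
  change _ + (bc G w + _) = _
  omega

lemma length_extendWalk (e : G.Dart) (w : G.Walk e.snd e.snd) :
    (extendWalk e w).length = w.length + 2 := by
  simp [extendWalk]

lemma extendWalk_injective (e : G.Dart) : Function.Injective (extendWalk e) := fun w w' h => by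
  have := congrArg Walk.darts h
  simp only [darts_extendWalk, List.cons.injEq, List.append_cancel_right_eq, true_and] at this
  exact Walk.darts_injective this

lemma exists_extendWalk_eq (e : G.Dart) {w : G.Walk e.fst e.fst}
    (hhead : w.darts.head? = some e) (hlast : w.darts.getLast? = some e.symm) :
    ∃ q, extendWalk e q = w := by
  cases w with
  | nil => simp at hhead
  | @cons _ y _ h p =>
    obtain rfl : y = e.snd := congrArg (·.snd) (Option.some.inj hhead)
    obtain ⟨z, h₂, p, rfl⟩ := Walk.not_nil_iff.mp (Walk.not_nil_of_ne (p := p) e.adj.ne.symm)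
    obtain ⟨x, q, h', hq⟩ := Walk.exists_cons_eq_concat h₂ p
    rw [hq] at hlast ⊢
    rw [Walk.darts_cons, Walk.darts_concat, List.concat_eq_append, ← List.cons_append,
      List.getLast?_concat] at hlast
    obtain rfl : x = e.snd := congrArg (·.fst) (Option.some.inj hlast)
    exact ⟨q, rfl⟩

def extendWalkEquiv (e : G.Dart) (n : ℕ) :
    {w : G.Walk e.snd e.snd // w.length = n} ≃
      {w : G.Walk e.fst e.fst // w.length = n + 2 ∧ w.darts.head? = some e ∧
        w.darts.getLast? = some e.symm} :=
  Equiv.ofBijective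
    (fun w => ⟨extendWalk e w.1, by rw [length_extendWalk, w.2], by simp [darts_extendWalk],
      by rw [darts_extendWalk, ← List.cons_append, List.getLast?_concat]⟩)
    ⟨fun w w' h => Subtype.ext (extendWalk_injective e (congrArg Subtype.val h)),
      fun ⟨w, hlen, hhead, hlast⟩ => by
        obtain ⟨q, rfl⟩ := exists_extendWalk_eq e hhead hlast
        exact ⟨⟨q, by rw [length_extendWalk] at hlen; omega⟩, rfl⟩⟩

lemma hasTail_iff_of_head {x : V} {w : G.Walk x x} {f : G.Dart} (hf : w.darts.head? = some f) :
    hasTail G w ↔ w.darts.getLast? = some f.symm := by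
  have hpos : 1 ≤ w.length := by
    rw [← w.length_darts, Nat.one_le_iff_ne_zero, Ne, List.length_eq_zero_iff]
    rintro h
    simp [h] at hf
  simp [hasTail, hf, hpos]

section LocallyFinite

variable [G.LocallyFinite] (t : ℂ)

lemma cent_eq_sum (n : ℕ) (x y : V) :
    Cent G t n x y = ∑ w : {w : G.Walk x y // w.length = n}, t ^ bc G w.1 :=
  tsum_fintype _

lemma centFL_eq_sum (n : ℕ) (x : V) (f g : G.Dart) :
    CentFL G t n x f g = ∑ w : {w : G.Walk x x // w.length = n},
      if w.1.darts.head? = some f ∧ w.1.darts.getLast? = some g then t ^ bc G w.1 else 0 :=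
  tsum_subtype_and_eq_sum_ite (p := fun w : G.Walk x x => w.length = n) (bc G · |> (t ^ ·))

lemma nfirst_eq_sum (n : ℕ) (x : V) (f : G.Dart) :
    Nfirst G t n x f = ∑ w : {w : G.Walk x x // w.length = n},
      if w.1.darts.head? = some f ∧ ¬ w.1.darts.getLast? = some f.symm then t ^ bc G w.1
        else 0 := by
  rw [Nfirst, tsum_subtype_and_eq_sum_ite (p := fun w : G.Walk x x => w.length = n)
    (bc G · |> (t ^ ·))]
  refine Finset.sum_congr rfl fun w _ => if_congr ?_ rfl rfl
  exact and_congr_right fun hf => not_congr (hasTail_iff_of_head hf)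

lemma centFL_add_two_eq_sum (e : G.Dart) {n : ℕ} (hn : n ≠ 0) :
    CentFL G t (n + 2) e.fst e e.symm = ∑ w : {w : G.Walk e.snd e.snd // w.length = n},
      t ^ (bc G w.1 + (if w.1.darts.head? = some e.symm then 1 else 0)
        + (if w.1.darts.getLast? = some e then 1 else 0)) := by
  rw [CentFL, ← Equiv.tsum_eq (extendWalkEquiv e n), tsum_fintype]
  exact Finset.sum_congr rfl fun w _ => congrArg (t ^ ·) (bc_extendWalk e (by rw [w.2]; exact hn))

lemma sum_ite_reverse (n : ℕ) (x : V) (f g : G.Dart) :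
    ∑ w : {w : G.Walk x x // w.length = n},
      (if ¬ w.1.darts.head? = some f ∧ w.1.darts.getLast? = some g then t ^ bc G w.1 else 0)
      = ∑ w : {w : G.Walk x x // w.length = n},
      if w.1.darts.head? = some g.symm ∧ ¬ w.1.darts.getLast? = some f.symm then t ^ bc G w.1
        else 0 := by
  have hrev : Function.Involutive (Walk.reverse : G.Walk x x → G.Walk x x) :=
    Walk.reverse_reverse
  have hsymm (o : Option G.Dart) (d : G.Dart) : o.map Dart.symm = some d.symm ↔ o = some d := by
    rw [← Option.map_some, (Option.map_injective Dart.symm_involutive.injective).eq_iff]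
  refine Fintype.sum_equiv (hrev.toPerm.subtypeEquiv fun w => by simp) _ _ fun w => ?_
  simp only [Equiv.subtypeEquiv_apply, Function.Involutive.coe_toPerm, head?_darts_reverse,
    getLast?_darts_reverse, bc_reverse, hsymm, and_comm]

end LocallyFinite

theorem centFL_recurrence_general {V : Type*} (G : SimpleGraph V) [G.LocallyFinite]
    (t : ℂ) (x₀ : V) (e : G.Dart) (he : e.fst = x₀) (m : ℕ) (hm : 3 ≤ m) :
    CentFL G t m x₀ e e.symm
      = Cent G t (m - 2) e.snd e.snd + 2 * (t - 1) * Nfirst G t (m - 2) e.snd e.symm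
        + (t ^ 2 - 1) * CentFL G t (m - 2) e.snd e.symm e := by
  subst he
  obtain ⟨n, rfl⟩ : ∃ n, m = n + 2 := ⟨m - 2, by omega⟩
  rw [Nat.add_sub_cancel, centFL_add_two_eq_sum t e (by omega), cent_eq_sum, nfirst_eq_sum,
    centFL_eq_sum]
  simp only [pow_add_ite_add_ite, Finset.sum_add_distrib, ← Finset.mul_sum]
  rw [sum_ite_reverse, Dart.symm_symm]
  ring

/-- For a connected simple graph with degrees bounded by `M`, a vertex `x₀`, an edge `e`
with origin `x₀`, and `m ≥ 3`:
`C_m(t)(x₀, e, ē) = C_{m−2}(t)(t(e), t(e)) + 2(t−1) N_{m−2}(t, t(e), ē)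
  + (t²−1) C_{m−2}(t)(t(e), ē, e)`. -/
theorem centFL_recurrence {V : Type*} (G : SimpleGraph V) [G.LocallyFinite] (M : ℕ)
    (hconn : G.Connected) (hM : ∀ v : V, G.degree v ≤ M)
    (t : ℂ) (x₀ : V) (e : G.Dart) (he : e.fst = x₀) (m : ℕ) (hm : 3 ≤ m) :
    CentFL G t m x₀ e e.symm
      = Cent G t (m - 2) e.snd e.snd + 2 * (t - 1) * Nfirst G t (m - 2) e.snd e.symm
        + (t ^ 2 - 1) * CentFL G t (m - 2) e.snd e.symm e :=
  centFL_recurrence_general G t x₀ e he m hm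

end BZ
end
end

section
/- Let q ≥ 1 be a real number, λ a real number with 0 ≤ λ ≤ 2(q+1), t real with |t| < 1, and 0 < u < 1/α(t) where α(t) = ((q+1) + √((q+1)² + 4(|t|+1)(q+1)))/2. Then (q+t)(1−t)u + 1/u − (q+1−λ) > 0. -/
/-- Positivity estimate for the `G(t)`-transform of the spectral representation of the
heat kernel of a `(q+1)`-regular graph: for `q ≥ 1`, `0 ≤ λ ≤ 2(q+1)`, `|t| < 1` and
`0 < u < 1/α(t)` with `α(t) = ((q+1) + √((q+1)² + 4(|t|+1)(q+1)))/2`, one has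
`(q+t)(1−t)u + 1/u − (q+1−λ) > 0`. -/
theorem Gtransform_exponent_pos (q lam t u : ℝ)
    (hq : 1 ≤ q) (hlam0 : 0 ≤ lam) (hlam1 : lam ≤ 2 * (q + 1)) (ht : |t| < 1)
    (hu0 : 0 < u)
    (hu1 : u < 1 / (((q + 1) + Real.sqrt ((q + 1) ^ 2 + 4 * (|t| + 1) * (q + 1))) / 2)) :
    (q + t) * (1 - t) * u + 1 / u - (q + 1 - lam) > 0 := by
  obtain ⟨ht1, ht2⟩ := abs_lt.mp ht
  set A : ℝ := (q + 1) ^ 2 + 4 * (|t| + 1) * (q + 1) with hA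
  have habs : 0 ≤ |t| := abs_nonneg t
  have hAnn : 0 ≤ A := by nlinarith
  have hsq : Real.sqrt A ^ 2 = A := Real.sq_sqrt hAnn
  have hs1 : q + 1 < Real.sqrt A := by
    nlinarith [Real.sqrt_nonneg A]
  set α : ℝ := ((q + 1) + Real.sqrt A) / 2 with hα
  have hαgt : q + 1 < α := by simp only [hα]; linarith
  have hαpos : 0 < α := by linarith
  have h2 : α < 1 / u := by
    rw [lt_div_iff₀ hu0]
    have := (lt_div_iff₀ hαpos).mp hu1
    linarith [this]
  have h3 : 0 ≤ (q + t) * (1 - t) * u :=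
    mul_nonneg (mul_nonneg (by linarith) (by linarith)) hu0.le
  linarith
end
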